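/- arXiv:1507.01460 — 5 statements merged into one kernel-verified Lean document; each statement's English description precedes it below -/
import Mathlib

section
/- For any functor f : A ⥤ B, the functor A ⥤ Comma (𝟭 B) f = B ↓ f (sending a to (f.obj a, a, identity of f.obj a)) induced by the identity natural transformation is fully faithful, and precomposition with this functor A ⥤ B ↓ f induces, for any presheaf-like 'module' given by a discrete fibration E over A × B, a bijection between maps of spans B ↓ f ⟶ E over A × B and maps of spans A ⟶ E over A × B, where A is viewed as the span (𝟭 A, f). -/
open CategoryTheory

universe v u₁ u₂

variable {A : Type u₁} {B : Type u₂} [Category.{v} A] [Category.{v} B]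

/-- The canonical functor `t : A ⥤ B ↓ f` sending `a` to `(f.obj a, a, 𝟙)`. -/
@[simps]
def commaUnit (f : A ⥤ B) : A ⥤ Comma (𝟭 B) f where
  obj a := { left := f.obj a, right := a, hom := 𝟙 (f.obj a) }
  map u := { left := f.map u, right := u, w := by simp }

/-- The covariant represented module `B ↓ f`, as a profunctor `Bᵒᵖ × A ⥤ Type v`. -/
@[simps]
def repCov (f : A ⥤ B) : Bᵒᵖ × A ⥤ Type v where
  obj p := p.1.unop ⟶ f.obj p.2
  map h := TypeCat.ofHom fun x => h.1.unop ≫ x ≫ f.map h.2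
  map_id := by intro p; ext x; simp
  map_comp := by intro p q r h h'; ext x; simp

/-- Yoneda lemma for the represented module `B ↓ f`: the canonical functor
`t : A ⥤ B ↓ f` is fully faithful, and for any module `E` from `A` to `B`, restriction
along `t` gives a bijection between module maps `B ↓ f ⟶ E` and maps of spans
`A ⟶ E` over `A × B` (i.e. natural families of elements of `E` along `(𝟭 A, f)`). -/
theorem comma_yoneda (f : A ⥤ B) :
    ((commaUnit f).Full ∧ (commaUnit f).Faithful) ∧
    ∀ (E : Bᵒᵖ × A ⥤ Type v) (φ : ∀ a : A, E.obj (Opposite.op (f.obj a), a)),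
      (∀ {a a' : A} (u : a ⟶ a'),
          E.map ((𝟙 (Opposite.op (f.obj a)), u) :
              (Opposite.op (f.obj a), a) ⟶ (Opposite.op (f.obj a), a')) (φ a) =
            E.map (((f.map u).op, 𝟙 a') :
              (Opposite.op (f.obj a'), a') ⟶ (Opposite.op (f.obj a), a')) (φ a')) →
      ∃! η : repCov f ⟶ E,
        ∀ a : A, η.app (Opposite.op (f.obj a), a) (𝟙 (f.obj a)) = φ a := by
  refine ⟨⟨⟨fun {a a'} g => ?_⟩, ⟨fun {a a'} u u' h => ?_⟩⟩, ?_⟩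
  · exact ⟨g.right, by
      ext
      · have := g.w
        simp at this ⊢
        simpa [commaUnit] using this.symm
      · rfl⟩
  · exact congrArg CommaMorphism.right h
  · intro E φ hφ
    refine ⟨⟨fun p => TypeCat.ofHom fun (x : p.1.unop ⟶ f.obj p.2) => E.map ((x.op, 𝟙 p.2) : (Opposite.op (f.obj p.2), p.2) ⟶ p) (φ p.2), ?_⟩, ?_, ?_⟩
    · intro p q h
      ext (x : p.1.unop ⟶ f.obj p.2)
      change E.map (((h.1.unop ≫ x ≫ f.map h.2).op, 𝟙 q.2) : (Opposite.op (f.obj q.2), q.2) ⟶ q) (φ q.2) = E.map h (E.map ((x.op, 𝟙 p.2) : (Opposite.op (f.obj p.2), p.2) ⟶ p) (φ p.2))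
      have h1 : (((x.op, 𝟙 p.2) : (Opposite.op (f.obj p.2), p.2) ⟶ p) ≫ h)
          = ((h.1.unop ≫ x).op, h.2 ≫ 𝟙 q.2) := by
        apply Prod.ext <;> simp [op_comp]
      rw [← FunctorToTypes.map_comp_apply, h1]
      have h2 : (((h.1.unop ≫ x).op, h.2 ≫ 𝟙 q.2) :
          (Opposite.op (f.obj p.2), p.2) ⟶ q)
          = (((𝟙 (Opposite.op (f.obj p.2)), h.2) :
              (Opposite.op (f.obj p.2), p.2) ⟶ (Opposite.op (f.obj p.2), q.2)) ≫
            (((h.1.unop ≫ x).op, 𝟙 q.2) : (Opposite.op (f.obj p.2), q.2) ⟶ q) :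
              ((Opposite.op (f.obj p.2), p.2) : Bᵒᵖ × A) ⟶ q) := by
        apply Prod.ext <;> simp
      rw [h2, FunctorToTypes.map_comp_apply, hφ h.2, ← FunctorToTypes.map_comp_apply]
      have h3 : ((((f.map h.2).op, 𝟙 q.2) :
            (Opposite.op (f.obj q.2), q.2) ⟶ (Opposite.op (f.obj p.2), q.2)) ≫
            (((h.1.unop ≫ x).op, 𝟙 q.2) : (Opposite.op (f.obj p.2), q.2) ⟶ q) :
            ((Opposite.op (f.obj q.2), q.2) : Bᵒᵖ × A) ⟶ q)
          = ((h.1.unop ≫ x ≫ f.map h.2).op, 𝟙 q.2) := by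
        apply Prod.ext <;> simp
      rw [h3]
    · intro a
      change E.map (𝟙 ((Opposite.op (f.obj a), a) : Bᵒᵖ × A)) (φ a) = φ a
      exact FunctorToTypes.map_id_apply E (φ a)
    · intro η hη
      ext p (x : p.1.unop ⟶ f.obj p.2)
      have := NatTrans.naturality_apply η ((x.op, 𝟙 p.2) :
        (Opposite.op (f.obj p.2), p.2) ⟶ p) (𝟙 (f.obj p.2))
      change η.app p (x.op.unop ≫ 𝟙 (f.obj p.2) ≫ f.map (𝟙 p.2)) = E.map ((x.op, 𝟙 p.2) : (Opposite.op (f.obj p.2), p.2) ⟶ p) (η.app (Opposite.op (f.obj p.2), p.2) (𝟙 (f.obj p.2))) at this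
      have hx : (x.op.unop ≫ 𝟙 (f.obj p.2) ≫ f.map (𝟙 p.2)) = x := by simp
      rw [hx, hη p.2] at this
      exact this
end

section
/- Pointwise right Kan extensions are stable under pasting with comma squares: if ν exhibits r : B ⥤ C as the pointwise right Kan extension of f : A ⥤ C along k : A ⥤ B, and given any functor b : E ⥤ B with comma square over the cospan (b, k) — i.e., the comma category Comma b k with projections h : Comma b k ⥤ E, g : Comma b k ⥤ A and canonical transformation λ : h ⋙ b ⟶ g ⋙ k — then the pasted transformation exhibits b ⋙ r as the pointwise right Kan extension of g ⋙ f along h. -/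
/-!
For `e : E`, the cone of the pasted extension at `e` is indexed by `e ↓ Comma.fst b k`, whose
objects are `(x : e ⟶ e', a, φ : b e' ⟶ k a)`. The fibre `b e ↓ k`, embedded by `x := 𝟙 e`, is
initial there: the embedding is left adjoint to `(x, a, φ) ↦ (a, b.map x ≫ φ)`. Restricted to this
fibre the cone becomes the cone of `ν` at `b e`, which is a limit by hypothesis.
-/

open CategoryTheory

universe v₁ v₂ v₃ v₄ u₁ u₂ u₃ u₄

namespace CategoryTheory

namespace StructuredArrow

variable {A : Type u₁} {B : Type u₂} {E : Type u₄}
    [Category.{v₁} A] [Category.{v₂} B] [Category.{v₄} E]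
    (k : A ⥤ B) (b : E ⥤ B) (e : E)

def toCommaFst : StructuredArrow (b.obj e) k ⥤ StructuredArrow e (Comma.fst b k) where
  obj y := mk (Y := Comma.mk e y.right y.hom) (𝟙 e)
  map m := homMk { left := 𝟙 e, right := m.right, w := by simp }

def ofCommaFst : StructuredArrow e (Comma.fst b k) ⥤ StructuredArrow (b.obj e) k where
  obj x := mk (b.map x.hom ≫ x.right.hom)
  map m := homMk m.right.right (by simp [← StructuredArrow.w m])

def toCommaFstAdjunction : toCommaFst k b e ⊣ ofCommaFst k b e :=
  Adjunction.mkOfUnitCounit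
    { unit.app y := homMk (𝟙 y.right) (by simp [toCommaFst, ofCommaFst])
      unit.naturality _ _ _ := by ext; exact (Category.comp_id _).trans (Category.id_comp _).symm
      counit.app x :=
        homMk { left := x.hom, right := 𝟙 x.right.right, w := by simp [toCommaFst, ofCommaFst] }
          (Category.id_comp _)
      counit.naturality _ _ m := by
        ext
        · exact (Category.id_comp _).trans (StructuredArrow.w m).symm
        · exact (Category.comp_id _).trans (Category.id_comp _).symm
      left_triangle := by ext <;> exact (Category.id_comp _).trans (Category.id_comp _)
      right_triangle := by ext; exact (Category.id_comp _).trans (Category.id_comp _) }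

instance : (toCommaFst k b e).Initial :=
  Functor.initial_of_adjunction (toCommaFstAdjunction k b e)

end StructuredArrow

namespace Functor.RightExtension

variable {A : Type u₁} {B : Type u₂} {C : Type u₃} {E : Type u₄}
    [Category.{v₁} A] [Category.{v₂} B] [Category.{v₃} C] [Category.{v₄} E]
    {k : A ⥤ B} {f : A ⥤ C}

def pasteComma (α : k.RightExtension f) (b : E ⥤ B) :
    (Comma.fst b k).RightExtension (Comma.snd b k ⋙ f) :=
  mk (b ⋙ α.left) <|
    (associator (Comma.fst b k) b α.left).inv ≫ whiskerRight (Comma.natTrans b k) α.left ≫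
      (associator (Comma.snd b k) k α.left).hom ≫ whiskerLeft (Comma.snd b k) α.hom

def pasteCommaConeAtWhiskerIso (α : k.RightExtension f) (b : E ⥤ B) (e : E) :
    ((α.pasteComma b).coneAt e).whisker (StructuredArrow.toCommaFst k b e) ≅
      α.coneAt (b.obj e) :=
  Limits.Cone.ext (Iso.refl _) fun y => by
    show (b ⋙ α.left).map (𝟙 e) ≫ 𝟙 _ ≫ α.left.map y.hom ≫ 𝟙 _ ≫ α.hom.app y.right =
      𝟙 _ ≫ α.left.map y.hom ≫ α.hom.app y.right
    simp

noncomputable def IsPointwiseRightKanExtensionAt.pasteComma {α : k.RightExtension f}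
    {b : E ⥤ B} {e : E} (h : α.IsPointwiseRightKanExtensionAt (b.obj e)) :
    (α.pasteComma b).IsPointwiseRightKanExtensionAt e :=
  Initial.isLimitWhiskerEquiv (StructuredArrow.toCommaFst k b e) _
    (h.ofIsoLimit (pasteCommaConeAtWhiskerIso α b e).symm)

end Functor.RightExtension

end CategoryTheory

/-- Pointwise right Kan extensions are stable under pasting with comma squares: if
`ν : k ⋙ r ⟶ f` exhibits `r` as a pointwise right Kan extension of `f` along `k`, and
`b : E ⥤ B` is any functor, then the transformation obtained by pasting `ν` with the
comma square of `(b, k)` exhibits `b ⋙ r` as a pointwise right Kan extension of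
`Comma.snd b k ⋙ f` along `Comma.fst b k`. -/
theorem pointwise_rke_comma_stable
    {A : Type u₁} {B : Type u₂} {C : Type u₃} {E : Type u₄}
    [Category.{v₁} A] [Category.{v₂} B] [Category.{v₃} C] [Category.{v₄} E]
    (k : A ⥤ B) (f : A ⥤ C) (r : B ⥤ C) (ν : k ⋙ r ⟶ f)
    (H : (Functor.RightExtension.mk r ν).IsPointwiseRightKanExtension)
    (b : E ⥤ B) :
    Nonempty ((Functor.RightExtension.mk (b ⋙ r)
      ((Functor.associator (Comma.fst b k) b r).inv ≫
        Functor.whiskerRight (Comma.natTrans b k) r ≫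
        (Functor.associator (Comma.snd b k) k r).hom ≫
        Functor.whiskerLeft (Comma.snd b k) ν)).IsPointwiseRightKanExtension) :=
  ⟨fun e => (H (b.obj e)).pasteComma⟩
end

section
/- Beck–Chevalley for comma squares: given functors g : C ⥤ A and f : B ⥤ A, form the comma category D = Comma f g with projections h : D ⥤ B, k' : D ⥤ C and the canonical natural transformation λ : h ⋙ f ⟶ k' ⋙ g. Suppose E is a category admitting the relevant pointwise right Kan extensions: for u : C ⥤ E a functor with pointwise right Kan extension Ran_g u along g, the canonical 'mate' natural transformation f^*(Ran_g u) ⟶ Ran_h (k'^* u), i.e., (Ran_g u) ∘ f ⟶ Ran_h (u ∘ k'), is an isomorphism, where the mate is induced by λ from the universal property of Ran_h. -/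
open CategoryTheory

universe v₁ v₂ v₃ v₄ u₁ u₂ u₃ u₄

open Limits

namespace BeckChevalleyAux

variable {A : Type u₁} {B : Type u₂} {C : Type u₃}
  [Category.{v₁} A] [Category.{v₂} B] [Category.{v₃} C]
  (f : B ⥤ A) (g : C ⥤ A) (b : B)

@[simps]
def iFunctor : StructuredArrow (f.obj b) g ⥤ StructuredArrow b (Comma.fst f g) where
  obj ψ := StructuredArrow.mk
    (Y := ({ left := b, right := ψ.right, hom := ψ.hom } : Comma f g)) (𝟙 b)
  map {ψ ψ'} ξ := StructuredArrow.homMk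
    ({ left := 𝟙 b, right := ξ.right,
       w := by simp [StructuredArrow.w ξ] } : ({ left := b, right := ψ.right, hom := ψ.hom } : Comma f g) ⟶ _)
    (by simp)

@[simps]
def eFunctor : StructuredArrow b (Comma.fst f g) ⥤ StructuredArrow (f.obj b) g where
  obj φ := StructuredArrow.mk (f.map φ.hom ≫ φ.right.hom)
  map {φ φ'} ξ := StructuredArrow.homMk ξ.right.right (by
    have h1 := ξ.right.w
    have h2 := StructuredArrow.w ξ
    dsimp at h1 h2 ⊢
    rw [Category.assoc, ← h1, ← Functor.map_comp_assoc, ← h2]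
    rfl)

def adj : iFunctor f g b ⊣ eFunctor f g b :=
  Adjunction.mkOfHomEquiv
    { homEquiv := fun ψ φ =>
        { toFun := fun χ => StructuredArrow.homMk χ.right.right (by
            have h1 := χ.right.w
            have h2 := StructuredArrow.w χ
            show ψ.hom ≫ g.map χ.right.right = f.map φ.hom ≫ φ.right.hom
            exact h1.symm.trans (by
              rw [← h2]
              exact congrArg (fun x => f.map x ≫ φ.right.hom) (Category.id_comp _).symm))
          invFun := fun ω => StructuredArrow.homMk
            ({ left := φ.hom, right := ω.right,
               w := by
                 have := StructuredArrow.w ω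
                 exact this.symm } : _ ⟶ φ.right)
            (by exact Category.id_comp _)
          left_inv := fun χ => by
            ext
            · exact (StructuredArrow.w χ).symm.trans (by exact Category.id_comp _)
            · rfl
          right_inv := fun ω => by ext; rfl }
      homEquiv_naturality_left_symm := fun f₁ g₁ => by
        ext
        · exact (Category.id_comp _).symm
        · rfl }

instance : (iFunctor f g b).Initial := Functor.initial_of_adjunction (adj f g b)

end BeckChevalleyAux

/-- Beck–Chevalley for comma squares: given a cospan `f : B ⥤ A`, `g : C ⥤ A`, form the
comma category `Comma f g` with projections `h = Comma.fst f g`, `k' = Comma.snd f g`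
and canonical transformation `λ = Comma.natTrans f g : h ⋙ f ⟶ k' ⋙ g`.  If
`ν : g ⋙ r ⟶ u` exhibits `r` as a pointwise right Kan extension of `u` along `g`, and
`ν' : h ⋙ r' ⟶ k' ⋙ u` exhibits `r'` as a pointwise right Kan extension of `k' ⋙ u`
along `h`, then the canonical mate `f ⋙ r ⟶ r'` (the unique morphism compatible with
the pasting of `λ` and `ν` via the universal property of `r'`) is an isomorphism. -/
theorem beck_chevalley_comma
    {A : Type u₁} {B : Type u₂} {C : Type u₃} {E : Type u₄}
    [Category.{v₁} A] [Category.{v₂} B] [Category.{v₃} C] [Category.{v₄} E]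
    (f : B ⥤ A) (g : C ⥤ A) (u : C ⥤ E)
    (r : A ⥤ E) (ν : g ⋙ r ⟶ u)
    (H₁ : (Functor.RightExtension.mk r ν).IsPointwiseRightKanExtension)
    (r' : B ⥤ E) (ν' : Comma.fst f g ⋙ r' ⟶ Comma.snd f g ⋙ u)
    (H₂ : (Functor.RightExtension.mk r' ν').IsPointwiseRightKanExtension) :
    (∃ m : f ⋙ r ⟶ r',
        CategoryTheory.Functor.whiskerLeft (Comma.fst f g) m ≫ ν' =
          (Functor.associator (Comma.fst f g) f r).inv ≫
            CategoryTheory.Functor.whiskerRight (Comma.natTrans f g) r ≫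
            (Functor.associator (Comma.snd f g) g r).hom ≫
            CategoryTheory.Functor.whiskerLeft (Comma.snd f g) ν) ∧
    (∀ m : f ⋙ r ⟶ r',
        CategoryTheory.Functor.whiskerLeft (Comma.fst f g) m ≫ ν' =
          (Functor.associator (Comma.fst f g) f r).inv ≫
            CategoryTheory.Functor.whiskerRight (Comma.natTrans f g) r ≫
            (Functor.associator (Comma.snd f g) g r).hom ≫
            CategoryTheory.Functor.whiskerLeft (Comma.snd f g) ν →
        IsIso m) := by
  haveI inst : r'.IsRightKanExtension ν' := H₂.isRightKanExtension
  constructor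
  · exact ⟨r'.liftOfIsRightKanExtension ν' (f ⋙ r) _,
      r'.liftOfIsRightKanExtension_fac ν' (f ⋙ r) _⟩
  · intro m hm
    have hb : ∀ (y : Comma f g), m.app y.left ≫ ν'.app y = r.map y.hom ≫ ν.app y.right := by
      intro y
      have := NatTrans.congr_app hm y
      simp at this
      exact this
    suffices h : ∀ b, IsIso (m.app b) from NatIso.isIso_of_isIso_app m
    intro b
    have Q : IsLimit (((Functor.RightExtension.mk r' ν').coneAt b).whisker
        (BeckChevalleyAux.iFunctor f g b)) :=
      (Functor.Initial.isLimitWhiskerEquiv _ _).symm (H₂ b)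
    have key : m.app b = ((H₁ (f.obj b)).conePointUniqueUpToIso Q).hom := by
      apply Q.hom_ext
      intro ψ
      erw [IsLimit.conePointUniqueUpToIso_hom_comp]
      have := hb (⟨b, ψ.right, ψ.hom⟩ : Comma f g)
      dsimp [BeckChevalleyAux.iFunctor]
      simp at this ⊢
      erw [Category.id_comp]
      exact this
    rw [key]
    exact Iso.isIso_hom _
end

section
/- Exact squares compose horizontally: given a diagram of categories and functors with squares λ : h ⋙ f ⟶ k ⋙ g (over cospan f : B ⥤ A, g : C ⥤ A with span h : D ⥤ B, k : D ⥤ C) and μ : ℓ ⋙ k ⟶ q ⋙ p (over cospan k : D ⥤ C, p : E₀ ⥤ C with span ℓ : F ⥤ D, q : F ⥤ E₀), if both λ and μ are exact squares, then the horizontally pasted square with 2-cell (λ ∘ ℓ) · (g ∘ μ) : (ℓ ⋙ h) ⋙ f ⟶ (q ⋙ p) ⋙ g, i.e. the composite transformation f(h(ℓ−)) ⟶ g(p(q−)), is exact. -/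
open CategoryTheory

universe v u₁ u₂ u₃ u₄ u₅ u₆

section ExactSquare

variable {A : Type u₁} {B : Type u₂} {C : Type u₃} {D : Type u₄}
  [Category.{v} A] [Category.{v} B] [Category.{v} C] [Category.{v} D]

/-- One-step coend relation for the tensor product
`∫^{d : D} Hom_B(b, h.obj d) × Hom_C(k.obj d, c)`:
for `δ : d ⟶ d'`, identify `(d, v, k.map δ ≫ u')` with `(d', v ≫ h.map δ, u')`. -/
def ExactRel (h : D ⥤ B) (k : D ⥤ C) (b : B) (c : C) :
    (Σ d : D, (b ⟶ h.obj d) × (k.obj d ⟶ c)) →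
    (Σ d : D, (b ⟶ h.obj d) × (k.obj d ⟶ c)) → Prop :=
  fun x y => ∃ δ : x.1 ⟶ y.1, y.2.1 = x.2.1 ≫ h.map δ ∧ x.2.2 = k.map δ ≫ y.2.2

/-- The canonical comparison from the coend
`∫^{d} Hom_B(b, h.obj d) × Hom_C(k.obj d, c)` to `Hom_A(f.obj b, g.obj c)` induced by a
square `lam : h ⋙ f ⟶ k ⋙ g`. -/
def exactComparison (f : B ⥤ A) (g : C ⥤ A) (h : D ⥤ B) (k : D ⥤ C)
    (lam : h ⋙ f ⟶ k ⋙ g) (b : B) (c : C) :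
    Quot (ExactRel h k b c) → (f.obj b ⟶ g.obj c) :=
  Quot.lift (fun x => f.map x.2.1 ≫ lam.app x.1 ≫ g.map x.2.2) (by
    rintro ⟨d, v, u⟩ ⟨d', v', u'⟩ ⟨δ, h1, h2⟩
    dsimp only at h1 h2 ⊢
    rw [h1, h2]
    simp only [Functor.map_comp, Category.assoc]
    rw [show f.map (h.map δ) = (h ⋙ f).map δ from rfl, NatTrans.naturality_assoc]
    rfl)

/-- A square `lam : h ⋙ f ⟶ k ⋙ g` is exact (in the sense of Guitart) when the
canonical comparison from the coend to the comma profunctor is a bijection. -/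
def IsExactSquare (f : B ⥤ A) (g : C ⥤ A) (h : D ⥤ B) (k : D ⥤ C)
    (lam : h ⋙ f ⟶ k ⋙ g) : Prop :=
  ∀ (b : B) (c : C), Function.Bijective (exactComparison f g h k lam b c)

end ExactSquare

section Compose

variable {A : Type u₁} {B : Type u₂} {C : Type u₃} {D : Type u₄} {E₀ : Type u₅} {F : Type u₆}
  [Category.{v} A] [Category.{v} B] [Category.{v} C] [Category.{v} D]
  [Category.{v} E₀] [Category.{v} F]
  (f : B ⥤ A) (g : C ⥤ A) (h : D ⥤ B) (k : D ⥤ C) (lam : h ⋙ f ⟶ k ⋙ g)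
  (p : E₀ ⥤ C) (l : F ⥤ D) (q : F ⥤ E₀) (mu : l ⋙ k ⟶ q ⋙ p)

/-- Map to the middle coend: `(x, v, s) ↦ (l x, v, mu.app x ≫ p.map s)`. -/
def exactTheta (b : B) (e : E₀) :
    Quot (ExactRel (l ⋙ h) q b e) → Quot (ExactRel h k b (p.obj e)) :=
  Quot.lift (fun x => Quot.mk _ ⟨l.obj x.1, x.2.1, mu.app x.1 ≫ p.map x.2.2⟩) (by
    rintro ⟨x, v, s⟩ ⟨x', v', s'⟩ ⟨φ, h1, h2⟩
    dsimp only at h1 h2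
    apply Quot.sound
    refine ⟨l.map φ, by simpa using h1, ?_⟩
    dsimp only
    rw [h2, p.map_comp, show p.map (q.map φ) = (q ⋙ p).map φ from rfl,
      ← mu.naturality_assoc]
    rfl)

/-- Pushforward of the `mu`-coend along `δ : d ⟶ d'`. -/
def exactPush (e : E₀) {d d' : D} (δ : d ⟶ d') :
    Quot (ExactRel l q d' e) → Quot (ExactRel l q d e) :=
  Quot.lift (fun x => Quot.mk _ ⟨x.1, δ ≫ x.2.1, x.2.2⟩) (by
    rintro ⟨x, w, s⟩ ⟨x', w', s'⟩ ⟨φ, h1, h2⟩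
    dsimp only at h1 h2
    apply Quot.sound
    exact ⟨φ, by simp [h1], h2⟩)

theorem exactComparison_push (e : E₀) {d d' : D} (δ : d ⟶ d')
    (z : Quot (ExactRel l q d' e)) :
    exactComparison k p l q mu d e (exactPush l q e δ z) =
      k.map δ ≫ exactComparison k p l q mu d' e z := by
  induction z using Quot.ind with
  | _ x =>
    rcases x with ⟨x, w, s⟩
    simp [exactComparison, exactPush]

/-- `(x, w, s) ↦ (x, v ≫ h.map w, s)`. -/
def exactPsiAux (b : B) (e : E₀) (d : D) (v : b ⟶ h.obj d) :
    Quot (ExactRel l q d e) → Quot (ExactRel (l ⋙ h) q b e) :=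
  Quot.lift (fun x => Quot.mk _ ⟨x.1, v ≫ h.map x.2.1, x.2.2⟩) (by
    rintro ⟨x, w, s⟩ ⟨x', w', s'⟩ ⟨φ, h1, h2⟩
    dsimp only at h1 h2
    apply Quot.sound
    refine ⟨φ, ?_, h2⟩
    dsimp only [Functor.comp_map]
    rw [h1]
    simp)

theorem exactPsiAux_push (b : B) (e : E₀) {d d' : D} (δ : d ⟶ d')
    (v : b ⟶ h.obj d) (z : Quot (ExactRel l q d' e)) :
    exactPsiAux h l q b e d v (exactPush l q e δ z) =
      exactPsiAux h l q b e d' (v ≫ h.map δ) z := by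
  induction z using Quot.ind with
  | _ x =>
    rcases x with ⟨x, w, s⟩
    simp [exactPsiAux, exactPush]

end Compose

/-- Exact squares compose horizontally: if `lam : h ⋙ f ⟶ k ⋙ g` and
`mu : ℓ ⋙ k ⟶ q ⋙ p` are exact squares, then the horizontally pasted square, with
2-cell the composite `f (h (ℓ −)) ⟶ g (p (q −))`, is exact. -/
theorem exact_squares_compose
    {A : Type u₁} {B : Type u₂} {C : Type u₃} {D : Type u₄} {E₀ : Type u₅} {F : Type u₆}
    [Category.{v} A] [Category.{v} B] [Category.{v} C] [Category.{v} D]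
    [Category.{v} E₀] [Category.{v} F]
    (f : B ⥤ A) (g : C ⥤ A) (h : D ⥤ B) (k : D ⥤ C) (lam : h ⋙ f ⟶ k ⋙ g)
    (p : E₀ ⥤ C) (l : F ⥤ D) (q : F ⥤ E₀) (mu : l ⋙ k ⟶ q ⋙ p)
    (hlam : IsExactSquare f g h k lam) (hmu : IsExactSquare k p l q mu) :
    IsExactSquare f (p ⋙ g) (l ⋙ h) q
      ((Functor.associator l h f).hom ≫
        CategoryTheory.Functor.whiskerLeft l lam ≫
        (Functor.associator l k g).inv ≫
        CategoryTheory.Functor.whiskerRight mu g ≫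
        (Functor.associator q p g).hom) := by
  intro b e
  -- the comparison bijections for `mu`
  let E : ∀ d : D, Quot (ExactRel l q d e) ≃ (k.obj d ⟶ p.obj e) := fun d =>
    Equiv.ofBijective _ (hmu d e)
  have hE : ∀ (d : D) (z : Quot (ExactRel l q d e)),
      E d z = exactComparison k p l q mu d e z := fun _ _ => rfl
  -- the left inverse of `exactTheta`
  let Psi : Quot (ExactRel h k b (p.obj e)) → Quot (ExactRel (l ⋙ h) q b e) :=
    Quot.lift (fun x => exactPsiAux h l q b e x.1 x.2.1 ((E x.1).symm x.2.2)) (by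
      rintro ⟨d, v, u⟩ ⟨d', v', u'⟩ ⟨δ, h1, h2⟩
      dsimp only at h1 h2 ⊢
      have key : (E d).symm u = exactPush l q e δ ((E d').symm u') := by
        apply (E d).injective
        rw [Equiv.apply_symm_apply, hE, exactComparison_push, ← hE,
          Equiv.apply_symm_apply, h2]
      rw [key, exactPsiAux_push, h1])
  -- factorization of the pasted comparison through `exactTheta`
  have hfact : ∀ z : Quot (ExactRel (l ⋙ h) q b e),
      exactComparison f (p ⋙ g) (l ⋙ h) q
        ((Functor.associator l h f).hom ≫
          CategoryTheory.Functor.whiskerLeft l lam ≫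
          (Functor.associator l k g).inv ≫
          CategoryTheory.Functor.whiskerRight mu g ≫
          (Functor.associator q p g).hom) b e z =
      exactComparison f g h k lam b (p.obj e) (exactTheta h k p l q mu b e z) := by
    intro z
    induction z using Quot.ind with
    | _ x =>
      rcases x with ⟨x, v, s⟩
      simp [exactComparison, exactTheta]
  -- `Psi` is a left inverse of `exactTheta`
  have hleft : ∀ z : Quot (ExactRel (l ⋙ h) q b e),
      Psi (exactTheta h k p l q mu b e z) = z := by
    intro z
    induction z using Quot.ind with
    | _ x =>
      rcases x with ⟨x, v, s⟩
      show exactPsiAux h l q b e (l.obj x) v ((E (l.obj x)).symm (mu.app x ≫ p.map s)) =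
        Quot.mk _ ⟨x, v, s⟩
      have : (E (l.obj x)).symm (mu.app x ≫ p.map s) =
          Quot.mk _ ⟨x, 𝟙 (l.obj x), s⟩ := by
        apply (E (l.obj x)).injective
        rw [Equiv.apply_symm_apply, hE]
        simp [exactComparison]
      rw [this]
      simp [exactPsiAux]
  constructor
  · -- injectivity
    intro z₁ z₂ hz
    rw [hfact z₁, hfact z₂] at hz
    have := (hlam b (p.obj e)).1 hz
    calc z₁ = Psi (exactTheta h k p l q mu b e z₁) := (hleft z₁).symm
      _ = Psi (exactTheta h k p l q mu b e z₂) := by rw [this]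
      _ = z₂ := hleft z₂
  · -- surjectivity
    intro φ
    obtain ⟨z, hz⟩ := (hlam b (p.obj e)).2 φ
    induction z using Quot.ind with
    | _ x =>
      rcases x with ⟨d, v, u⟩
      obtain ⟨w, hw⟩ := (hmu d e).2 u
      induction w using Quot.ind with
      | _ y =>
        rcases y with ⟨x, w, s⟩
        refine ⟨Quot.mk _ ⟨x, v ≫ h.map w, s⟩, ?_⟩
        have hu : u = k.map w ≫ mu.app x ≫ p.map s := by
          rw [← hw]; rfl
        rw [← hz]
        show f.map (v ≫ h.map w) ≫ _ ≫ (p ⋙ g).map s = f.map v ≫ lam.app d ≫ g.map u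
        rw [hu]
        simp only [Functor.comp_obj, Functor.comp_map, Functor.map_comp, Category.assoc,
          NatTrans.comp_app, Functor.associator_hom_app, Functor.associator_inv_app,
          Functor.whiskerLeft_app, Functor.whiskerRight_app, Category.id_comp, Category.comp_id]
        rw [show f.map (h.map w) = (h ⋙ f).map w from rfl, NatTrans.naturality_assoc]
        rfl
end

section
/- Every comma square is exact: for a cospan g : C ⥤ A, f : B ⥤ A, the canonical square on Comma f g with projections p : Comma f g ⥤ B, q : Comma f g ⥤ C and canonical transformation λ : p ⋙ f ⟶ q ⋙ g induces an isomorphism of profunctors from the coend ∫^{e : Comma f g} Hom_C(c, q.obj e) × Hom_B(p.obj e, b) to Hom_A(f.obj b, g.obj c). -/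
open CategoryTheory

universe v u₁ u₂ u₃ u₄

/-- Every comma square is exact: the canonical square on `Comma f g` with its two
projections and canonical transformation induces an isomorphism of profunctors from the
coend `∫^{e : Comma f g} Hom_B(b, p.obj e) × Hom_C(q.obj e, c)` to
`Hom_A(f.obj b, g.obj c)`. -/
theorem comma_square_exact {A : Type u₁} {B : Type u₂} {C : Type u₃}
    [Category.{v} A] [Category.{v} B] [Category.{v} C]
    (f : B ⥤ A) (g : C ⥤ A) :
    IsExactSquare f g (Comma.fst f g) (Comma.snd f g) (Comma.natTrans f g) := by
  intro b c
  -- every class is represented by the canonical element at its image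
  have key : ∀ (x : Σ d : Comma f g, (b ⟶ (Comma.fst f g).obj d) × ((Comma.snd f g).obj d ⟶ c)),
      Quot.mk (ExactRel (Comma.fst f g) (Comma.snd f g) b c) x =
      Quot.mk (ExactRel (Comma.fst f g) (Comma.snd f g) b c)
        ⟨⟨b, c, f.map x.2.1 ≫ x.1.hom ≫ g.map x.2.2⟩, 𝟙 b, 𝟙 c⟩ := by
    rintro ⟨e, v, u⟩
    let e' : Comma f g := ⟨b, e.right, f.map v ≫ e.hom⟩
    have h1 : Quot.mk (ExactRel (Comma.fst f g) (Comma.snd f g) b c) ⟨e', 𝟙 b, u⟩ =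
        Quot.mk (ExactRel (Comma.fst f g) (Comma.snd f g) b c) ⟨e, v, u⟩ := by
      apply Quot.sound
      refine ⟨⟨v, 𝟙 e.right, ?_⟩, by simp [e'], by simp [e']; exact (Category.id_comp u).symm⟩
      simp [e']
    have h2 : Quot.mk (ExactRel (Comma.fst f g) (Comma.snd f g) b c) ⟨e', 𝟙 b, u⟩ =
        Quot.mk (ExactRel (Comma.fst f g) (Comma.snd f g) b c)
          ⟨⟨b, c, f.map v ≫ e.hom ≫ g.map u⟩, 𝟙 b, 𝟙 c⟩ := by
      apply Quot.sound
      refine ⟨⟨𝟙 b, u, ?_⟩, by simp [e'], by simp [e']; exact (Category.comp_id u).symm⟩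
      simp [e']
    exact h1.symm.trans h2
  constructor
  · intro x y hxy
    induction x using Quot.ind with | _ x =>
    induction y using Quot.ind with | _ y =>
    have hx := key x
    have hy := key y
    rw [hx, hy]
    have : f.map x.2.1 ≫ x.1.hom ≫ g.map x.2.2 = f.map y.2.1 ≫ y.1.hom ≫ g.map y.2.2 := by
      simpa [exactComparison, Comma.natTrans] using hxy
    rw [this]
  · intro φ
    refine ⟨Quot.mk _ ⟨⟨b, c, φ⟩, 𝟙 b, 𝟙 c⟩, ?_⟩
    simp [exactComparison, Comma.natTrans]
    exact (congrArg (φ ≫ ·) (g.map_id c)).trans (Category.comp_id φ)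
end
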